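/- For every λ > 0 and every n, Gutman's test φ_n^Gut with threshold λ satisfies, for all pairs of distributions (P̃1,P̃2) on X, β1(φ_n^Gut|P̃1,P̃2) ≤ (n + N + 1)^{|X|}·exp(−nλ), where N = ⌈αn⌉. -/

import Mathlib

/-!
Summing out the second training sequence, `β₁` is the `Q₁`-probability of the pairs `(x₁, y)` whose
types `(T₁, T₂)` satisfy `GJS(T₁, T₂, α) > λ`. Group the pairs by their count vectors `k`, `l`. The
type classes satisfy the hypergeometric identity `|T_k| |T_l| C(N+n, N) = |T_{k+l}| ∏ₐ C(kₐ+lₐ, kₐ)`,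
and the bounds `C(a+b, a) aᵃ bᵇ ≤ (a+b)^(a+b)` and `(N+n)^(N+n) ≤ (N+n+1) C(N+n, N) Nᴺ nⁿ` (the mode
of a binomial law) turn it into `|T_k| |T_l| ≤ (N+n+1) exp(-n GJS(T₁, T₂, N/n)) |T_{k+l}|`. As GJS is
nondecreasing in `α` and `N/n ≥ α`, a bad pair of classes has probability at most `(N+n+1) e^{-nλ}`
times the `Q₁^{N+n}`-probability of the class `k + l`. For fixed `k` these classes are distinct, and
there are at most `(N+1)^{|X|-1}` count vectors `k`.
-/

open Filter Topology MeasureTheory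

namespace Classification

variable {X : Type*} [Fintype X] [DecidableEq X]

/-- `P` is a probability mass function on the finite alphabet `X`. -/
def IsDist (P : X → ℝ) : Prop := (∀ x, 0 ≤ P x) ∧ ∑ x, P x = 1

/-- `P` has full support. -/
def FullSupport (P : X → ℝ) : Prop := ∀ x, 0 < P x

/-- Empirical distribution (type) of a sequence `x : Fin m → X`. -/
noncomputable def empDist {m : ℕ} (x : Fin m → X) : X → ℝ :=
  fun a => ((Finset.univ.filter fun i => x i = a).card : ℝ) / m

/-- Real-valued KL divergence with the usual `0 · log 0 = 0` convention. -/
noncomputable def klDivR (Q P : X → ℝ) : ℝ := ∑ x, Q x * Real.log (Q x / P x)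

open Classical in
/-- Extended-real-valued KL divergence: `⊤` when `Q` is not absolutely continuous w.r.t. `P`. -/
noncomputable def klDivE (Q P : X → ℝ) : EReal :=
  if ∀ x, P x = 0 → Q x = 0 then ((klDivR Q P : ℝ) : EReal) else ⊤

/-- The mixture `(α P1 + P2) / (1 + α)`. -/
noncomputable def mix (P1 P2 : X → ℝ) (α : ℝ) : X → ℝ :=
  fun x => (α * P1 x + P2 x) / (1 + α)

/-- Generalized Jensen–Shannon divergence
`GJS(P1,P2,α) = α D(P1 ‖ (αP1+P2)/(1+α)) + D(P2 ‖ (αP1+P2)/(1+α))`. -/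
noncomputable def GJS (P1 P2 : X → ℝ) (α : ℝ) : ℝ :=
  α * klDivR P1 (mix P1 P2 α) + klDivR P2 (mix P1 P2 α)

/-- Training sequence length `N = ⌈α n⌉`. -/
noncomputable def trainLen (α : ℝ) (n : ℕ) : ℕ := ⌈α * (n : ℝ)⌉₊

/-- Probability of observing the sequence `x` under i.i.d. sampling from `P`. -/
noncomputable def seqProb (P : X → ℝ) {m : ℕ} (x : Fin m → X) : ℝ := ∏ i, P (x i)

/-- A binary classification test: output `true` means "declare H₂",
`false` means "declare H₁". -/
abbrev BTest (X : Type*) (α : ℝ) (n : ℕ) : Type _ :=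
  (Fin (trainLen α n) → X) → (Fin (trainLen α n) → X) → (Fin n → X) → Bool

/-- Type-I error probability: probability of declaring `H₂` when `Y^n ~ P1` (hypothesis H₁). -/
noncomputable def beta1 {α : ℝ} {n : ℕ} (φ : BTest X α n) (P1 P2 : X → ℝ) : ℝ :=
  ∑ x1 : Fin (trainLen α n) → X, ∑ x2 : Fin (trainLen α n) → X, ∑ y : Fin n → X,
    if φ x1 x2 y = true then seqProb P1 x1 * seqProb P2 x2 * seqProb P1 y else 0

/-- Type-II error probability: probability of declaring `H₁` when `Y^n ~ P2` (hypothesis H₂). -/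
noncomputable def beta2 {α : ℝ} {n : ℕ} (φ : BTest X α n) (P1 P2 : X → ℝ) : ℝ :=
  ∑ x1 : Fin (trainLen α n) → X, ∑ x2 : Fin (trainLen α n) → X, ∑ y : Fin n → X,
    if φ x1 x2 y = false then seqProb P1 x1 * seqProb P2 x2 * seqProb P2 y else 0

open Classical in
/-- Gutman's test with threshold `lam`: declare `H₁` iff `GJS(T̂_{x₁}, T̂_y, α) ≤ lam`. -/
noncomputable def gutman (α lam : ℝ) (n : ℕ) : BTest X α n :=
  fun x1 _ y => if GJS (empDist x1) (empDist y) α ≤ lam then false else true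

open Classical in
/-- `- log x` as an extended real, with `⊤` at `x = 0`. -/
noncomputable def negLogE (x : ℝ) : EReal :=
  if x = 0 then ⊤ else ((-Real.log x : ℝ) : EReal)

/-- Gutman's exponent function
`F(P1,P2,α,lam) = min { α D(Q1‖P1) + D(Q2‖P2) : GJS(Q1,Q2,α) ≤ lam }` (as an inf in `EReal`). -/
noncomputable def Fexp (P1 P2 : X → ℝ) (α lam : ℝ) : EReal :=
  sInf {v : EReal | ∃ Q1 Q2 : X → ℝ, IsDist Q1 ∧ IsDist Q2 ∧ GJS Q1 Q2 α ≤ lam ∧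
    v = (α : EReal) * klDivE Q1 P1 + klDivE Q2 P2}

/-- Expectation of `f` under `P`. -/
noncomputable def expect (P : X → ℝ) (f : X → ℝ) : ℝ := ∑ x, P x * f x

/-- Variance of `f` under `P`. -/
noncomputable def varD (P : X → ℝ) (f : X → ℝ) : ℝ :=
  expect P (fun x => (f x - expect P f) ^ 2)

/-- Information density `ı₁(x) = log((1+α) P1(x) / (α P1(x) + P2(x)))`. -/
noncomputable def iDens1 (P1 P2 : X → ℝ) (α : ℝ) (x : X) : ℝ :=
  Real.log ((1 + α) * P1 x / (α * P1 x + P2 x))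

/-- Information density `ı₂(x) = log((1+α) P2(x) / (α P1(x) + P2(x)))`. -/
noncomputable def iDens2 (P1 P2 : X → ℝ) (α : ℝ) (x : X) : ℝ :=
  Real.log ((1 + α) * P2 x / (α * P1 x + P2 x))

/-- The dispersion `V(P1,P2,α) = α Var_{P1}[ı₁] + Var_{P2}[ı₂]`. -/
noncomputable def disp (P1 P2 : X → ℝ) (α : ℝ) : ℝ :=
  α * varD P1 (iDens1 P1 P2 α) + varD P2 (iDens2 P1 P2 α)

/-- The standard Gaussian cumulative distribution function `Φ`. -/
noncomputable def stdCDF (x : ℝ) : ℝ :=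
  (Real.sqrt (2 * Real.pi))⁻¹ * ∫ t in Set.Iic x, Real.exp (-t ^ 2 / 2)

/-- The inverse standard Gaussian cdf `Φ⁻¹`. -/
noncomputable def stdCDFInv (p : ℝ) : ℝ := sInf {x : ℝ | p ≤ stdCDF x}

/-- The non-asymptotic fundamental limit `λ*(n, α, ε | P1, P2)` for binary classification. -/
noncomputable def lamStar (α : ℝ) (n : ℕ) (ε : ℝ) (P1 P2 : X → ℝ) : ℝ :=
  sSup {lam : ℝ | 0 ≤ lam ∧ ∃ φ : BTest X α n,
    (∀ Q1 Q2 : X → ℝ, IsDist Q1 → IsDist Q2 →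
      beta1 φ Q1 Q2 ≤ Real.exp (-((n : ℝ) * lam))) ∧
    beta2 φ P1 P2 ≤ ε}

/-- Rényi divergence of order `γ`. -/
noncomputable def renyi (γ : ℝ) (P1 P2 : X → ℝ) : ℝ :=
  (1 / (γ - 1)) * Real.log (∑ x, P1 x ^ γ * P2 x ^ (1 - γ))

/-- The fundamental limit `τ*(n, α, ε | φ_n^Gut, P1, P2)` in the dual setting for Gutman's test. -/
noncomputable def tauStarGut (α : ℝ) (n : ℕ) (ε : ℝ) (P1 P2 : X → ℝ) : ℝ :=
  sSup {τ : ℝ | 0 ≤ τ ∧ ∃ lam : ℝ, 0 ≤ lam ∧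
    (∀ Q1 Q2 : X → ℝ, IsDist Q1 → IsDist Q2 →
      beta1 (gutman α lam n) Q1 Q2 ≤ ε) ∧
    beta2 (gutman α lam n) P1 P2 ≤ Real.exp (-((n : ℝ) * τ))}

/-- A two-sample homogeneity test: `true` means "declare H₂" (different distributions). -/
abbrev TTest (X : Type*) (α : ℝ) (n : ℕ) : Type _ :=
  (Fin (trainLen α n) → X) → (Fin n → X) → Bool

/-- False-alarm probability of a two-sample test. -/
noncomputable def betaFA {α : ℝ} {n : ℕ} (φ : TTest X α n) (P1 : X → ℝ) : ℝ :=
  ∑ x : Fin (trainLen α n) → X, ∑ y : Fin n → X,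
    if φ x y = true then seqProb P1 x * seqProb P1 y else 0

/-- Miss-detection probability of a two-sample test. -/
noncomputable def betaMD {α : ℝ} {n : ℕ} (φ : TTest X α n) (P1 P2 : X → ℝ) : ℝ :=
  ∑ x : Fin (trainLen α n) → X, ∑ y : Fin n → X,
    if φ x y = false then seqProb P1 x * seqProb P2 y else 0

/-- The fundamental limit `ξ*(n, α, ε | P1, P2)` for two-sample homogeneity testing. -/
noncomputable def xiStar (α : ℝ) (n : ℕ) (ε : ℝ) (P1 P2 : X → ℝ) : ℝ :=
  sSup {lam : ℝ | 0 ≤ lam ∧ ∃ φ : TTest X α n,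
    (∀ Q1 : X → ℝ, IsDist Q1 → betaFA φ Q1 ≤ Real.exp (-((n : ℝ) * lam))) ∧
    betaMD φ P1 P2 ≤ ε}

/-- An M-ary classification test with the rejection option: `some j` means "declare H_j",
`none` means "reject". -/
abbrev MTest (X : Type*) (M : ℕ) (α : ℝ) (n : ℕ) : Type _ :=
  (Fin M → Fin (trainLen α n) → X) → (Fin n → X) → Option (Fin M)

/-- Type-`j` error probability: probability of declaring some hypothesis other than
`H_j` or rejection, under `H_j`. -/
noncomputable def betaM {M : ℕ} {α : ℝ} {n : ℕ} (ψ : MTest X M α n)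
    (P : Fin M → X → ℝ) (j : Fin M) : ℝ :=
  ∑ xs : Fin M → Fin (trainLen α n) → X, ∑ y : Fin n → X,
    if ψ xs y ≠ some j ∧ ψ xs y ≠ none then
      (∏ i, seqProb (P i) (xs i)) * seqProb (P j) y else 0

/-- Type-`j` rejection probability: probability of rejecting under `H_j`. -/
noncomputable def zetaM {M : ℕ} {α : ℝ} {n : ℕ} (ψ : MTest X M α n)
    (P : Fin M → X → ℝ) (j : Fin M) : ℝ :=
  ∑ xs : Fin M → Fin (trainLen α n) → X, ∑ y : Fin n → X,
    if ψ xs y = none then (∏ i, seqProb (P i) (xs i)) * seqProb (P j) y else 0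

/-- The fundamental limit `λ*(n, α, ε | P)` for M-ary classification with rejection. -/
noncomputable def lamStarM (M : ℕ) (α : ℝ) (n : ℕ) (ε : Fin M → ℝ)
    (P : Fin M → X → ℝ) : ℝ :=
  sSup {lam : ℝ | 0 ≤ lam ∧ ∃ ψ : MTest X M α n,
    (∀ Q : Fin M → X → ℝ, (∀ i, IsDist (Q i)) → ∀ j,
      betaM ψ Q j ≤ Real.exp (-((n : ℝ) * lam))) ∧
    (∀ j, zetaM ψ P j ≤ ε j)}

open Classical in
/-- Gutman's M-ary test with rejection and threshold `lam`. -/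
noncomputable def gutmanM (M : ℕ) [NeZero M] (α lam : ℝ) (n : ℕ) : MTest X M α n :=
  fun xs y =>
    if ∃ i k : Fin M, i ≠ k ∧ GJS (empDist (xs i)) (empDist y) α ≤ lam ∧
        GJS (empDist (xs k)) (empDist y) α ≤ lam then none
    else if h : ∃ j : Fin M, GJS (empDist (xs j)) (empDist y) α ≤ lam then some h.choose
    else some 0

/-- The fundamental limit `τ*(n, α, ε | Ψ_n^Gut, P)` in the dual setting for
Gutman's M-ary test. -/
noncomputable def tauStarGutM (M : ℕ) [NeZero M] (α : ℝ) (n : ℕ) (ε : ℝ)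
    (P : Fin M → X → ℝ) : ℝ :=
  sSup {τ : ℝ | 0 ≤ τ ∧ ∃ lam : ℝ, 0 ≤ lam ∧
    (∀ Q : Fin M → X → ℝ, (∀ i, IsDist (Q i)) → ∀ j,
      betaM (gutmanM M α lam n) Q j ≤ ε) ∧
    (∀ j, zetaM (gutmanM M α lam n) P j ≤ Real.exp (-((n : ℝ) * τ)))}

/-- Generalized divergence of three distributions
`D_γ(P1,P2,P3) = (γ-1)⁻¹ log Σ_x P1(x)^{1-γ} P2(x)^{γ/2} P3(x)^{γ/2}`. -/
noncomputable def genDiv (γ : ℝ) (P1 P2 P3 : X → ℝ) : ℝ :=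
  (1 / (γ - 1)) * Real.log (∑ x, P1 x ^ (1 - γ) * P2 x ^ (γ / 2) * P3 x ^ (γ / 2))

/-- A binary classification test with the rejection option: `some 0` means "declare H₁",
`some 1` means "declare H₂", `none` means "reject". -/
abbrev RTest (X : Type*) (α : ℝ) (n : ℕ) : Type _ :=
  (Fin (trainLen α n) → X) → (Fin (trainLen α n) → X) → (Fin n → X) → Option (Fin 2)

/-- Type-1 error probability of a rejection test: declare `H₂` under `H₁`. -/
noncomputable def beta1R {α : ℝ} {n : ℕ} (ψ : RTest X α n) (P1 P2 : X → ℝ) : ℝ :=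
  ∑ x1 : Fin (trainLen α n) → X, ∑ x2 : Fin (trainLen α n) → X, ∑ y : Fin n → X,
    if ψ x1 x2 y = some 1 then seqProb P1 x1 * seqProb P2 x2 * seqProb P1 y else 0

/-- Type-2 error probability of a rejection test: declare `H₁` under `H₂`. -/
noncomputable def beta2R {α : ℝ} {n : ℕ} (ψ : RTest X α n) (P1 P2 : X → ℝ) : ℝ :=
  ∑ x1 : Fin (trainLen α n) → X, ∑ x2 : Fin (trainLen α n) → X, ∑ y : Fin n → X,
    if ψ x1 x2 y = some 0 then seqProb P1 x1 * seqProb P2 x2 * seqProb P2 y else 0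

open Classical in
/-- Type-`j` rejection probability of a binary rejection test. -/
noncomputable def zetaR {α : ℝ} {n : ℕ} (ψ : RTest X α n) (P1 P2 : X → ℝ) (j : Fin 2) : ℝ :=
  ∑ x1 : Fin (trainLen α n) → X, ∑ x2 : Fin (trainLen α n) → X, ∑ y : Fin n → X,
    if ψ x1 x2 y = none then
      seqProb P1 x1 * seqProb P2 x2 * seqProb (if j = 0 then P1 else P2) y else 0

/-- A binary test is type-based if it depends on the data only through the
triple of empirical distributions. -/
def TypeBasedB {α : ℝ} {n : ℕ} (φ : BTest X α n) : Prop :=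
  ∀ x1 x1' x2 x2' : Fin (trainLen α n) → X, ∀ y y' : Fin n → X,
    empDist x1 = empDist x1' → empDist x2 = empDist x2' → empDist y = empDist y' →
      φ x1 x2 y = φ x1' x2' y'

/-- An M-ary test is type-based if it depends on the data only through the
tuple of empirical distributions. -/
def TypeBasedM {M : ℕ} {α : ℝ} {n : ℕ} (ψ : MTest X M α n) : Prop :=
  ∀ xs xs' : Fin M → Fin (trainLen α n) → X, ∀ y y' : Fin n → X,
    (∀ i, empDist (xs i) = empDist (xs' i)) → empDist y = empDist y' →
      ψ xs y = ψ xs' y'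

open Classical in
/-- Probability of an event under hypothesis `H₂` in the binary setup. -/
noncomputable def prH2E (α : ℝ) (n : ℕ) (P1 P2 : X → ℝ)
    (E : (Fin (trainLen α n) → X) → (Fin (trainLen α n) → X) → (Fin n → X) → Prop) : ℝ :=
  ∑ x1 : Fin (trainLen α n) → X, ∑ x2 : Fin (trainLen α n) → X, ∑ y : Fin n → X,
    if E x1 x2 y then seqProb P1 x1 * seqProb P2 x2 * seqProb P2 y else 0

open Classical in
/-- Probability of an event under hypothesis `H_j` in the M-ary setup. -/
noncomputable def prHjM (M : ℕ) (α : ℝ) (n : ℕ) (P : Fin M → X → ℝ) (j : Fin M)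
    (E : (Fin M → Fin (trainLen α n) → X) → (Fin n → X) → Prop) : ℝ :=
  ∑ xs : Fin M → Fin (trainLen α n) → X, ∑ y : Fin n → X,
    if E xs y then (∏ i, seqProb (P i) (xs i)) * seqProb (P j) y else 0

/-- `η_n(α) = |X| log(n+1)/n + 2|X| log(1+αn)/(αn)`. -/
noncomputable def etaN (X : Type*) [Fintype X] (α : ℝ) (n : ℕ) : ℝ :=
  (Fintype.card X : ℝ) * Real.log ((n : ℝ) + 1) / n +
    2 * (Fintype.card X : ℝ) * Real.log (1 + α * n) / (α * n)

/-- `η_{n,M} = M |X| log(nα+1)/(nα) + |X| log(n+1)/n`. -/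
noncomputable def etaNM (X : Type*) [Fintype X] (M : ℕ) (α : ℝ) (n : ℕ) : ℝ :=
  (M : ℝ) * (Fintype.card X : ℝ) * Real.log ((n : ℝ) * α + 1) / ((n : ℝ) * α) +
    (Fintype.card X : ℝ) * Real.log ((n : ℝ) + 1) / n

/-- `Q` is an `m`-type: the empirical distribution of some sequence of length `m`. -/
def IsTypeDist (m : ℕ) (Q : X → ℝ) : Prop := ∃ x : Fin m → X, empDist x = Q

/-- The type-restricted exponent function `F_n`. -/
noncomputable def Fn (n : ℕ) (P1 P2 : X → ℝ) (α lam : ℝ) : ℝ :=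
  sInf {v : ℝ | ∃ Q1 Q2 : X → ℝ, IsTypeDist (trainLen α n) Q1 ∧ IsTypeDist n Q2 ∧
    GJS Q1 Q2 α ≤ lam ∧ v = α * klDivR Q1 P1 + klDivR Q2 P2}

/-- The second smallest value of a finite family of reals:
`min_{i ≠ j} max (v i) (v j)`. -/
noncomputable def secondMin {M : ℕ} (v : Fin M → ℝ) : ℝ :=
  sInf {t : ℝ | ∃ i j : Fin M, i ≠ j ∧ t = max (v i) (v j)}

/-- The tilted distribution `P^{(γ)}` with `γ = α/(1+α)`. -/
noncomputable def tilt (α : ℝ) (P1 P2 : X → ℝ) : X → ℝ :=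
  fun x => P1 x ^ (α / (1 + α)) * P2 x ^ (1 / (1 + α)) /
    ∑ a, P1 a ^ (α / (1 + α)) * P2 a ^ (1 / (1 + α))

end Classification

open Finset Real

namespace Classification

/-- `binomTerm N n j / (N + n) ^ (N + n)` is the probability of `j` under the binomial law with
`N + n` trials and success probability `N / (N + n)`. -/
def binomTerm (N n j : ℕ) : ℕ := (N + n).choose j * N ^ j * n ^ (N + n - j)

theorem sum_binomTerm (N n : ℕ) :
    ∑ j ∈ range (N + n + 1), binomTerm N n j = (N + n) ^ (N + n) := by
  rw [add_pow]
  exact sum_congr rfl fun j _ => by rw [binomTerm, Nat.cast_id]; ring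

theorem choose_mul_pow_mul_pow_le_pow (N n : ℕ) :
    (N + n).choose N * N ^ N * n ^ n ≤ (N + n) ^ (N + n) := by
  calc (N + n).choose N * N ^ N * n ^ n = binomTerm N n N := by
        rw [binomTerm, Nat.add_sub_cancel_left]
    _ ≤ ∑ j ∈ range (N + n + 1), binomTerm N n j :=
        single_le_sum (fun j _ => Nat.zero_le _) (mem_range.2 (by omega))
    _ = (N + n) ^ (N + n) := sum_binomTerm N n

theorem binomTerm_succ_mul (N n j : ℕ) :
    binomTerm N n (j + 1) * ((j + 1) * n) = binomTerm N n j * ((N + n - j) * N) := by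
  rcases lt_or_ge j (N + n) with hj | hj
  · obtain ⟨r, hr⟩ : ∃ r, N + n - j = r + 1 := ⟨N + n - j - 1, by omega⟩
    have hr' : N + n - (j + 1) = r := by omega
    rw [binomTerm, binomTerm, hr', hr]
    calc (N + n).choose (j + 1) * N ^ (j + 1) * n ^ r * ((j + 1) * n)
        = (N + n).choose (j + 1) * (j + 1) * N ^ (j + 1) * n ^ (r + 1) := by ring
      _ = _ := by rw [Nat.choose_succ_right_eq, hr]; ring
  · simp [binomTerm, Nat.choose_eq_zero_of_lt (Nat.lt_succ_of_le hj), Nat.sub_eq_zero_of_le hj]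

theorem binomTerm_le_binomTerm_self {N n : ℕ} (hn : n ≠ 0) (j : ℕ) :
    binomTerm N n j ≤ binomTerm N n N := by
  have hpos : ∀ i, 0 < (i + 1) * n := fun i => Nat.mul_pos i.succ_pos (Nat.pos_of_ne_zero hn)
  rcases le_total j N with hj | hj
  · refine monotoneOn_of_le_succ Set.ordConnected_Iic (fun i _ _ hi => ?_) hj le_rfl hj
    rw [Order.succ_eq_add_one] at hi ⊢
    have hi : i + 1 ≤ N := hi
    refine Nat.le_of_mul_le_mul_right ?_ (hpos i)
    rw [binomTerm_succ_mul]
    refine Nat.mul_le_mul_left _ ?_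
    calc (i + 1) * n ≤ N * (n + 1) := Nat.mul_le_mul hi (Nat.le_succ n)
      _ ≤ (N + n - i) * N := by rw [mul_comm]; exact Nat.mul_le_mul_right _ (by omega)
  · refine antitoneOn_nat_Ici_of_succ_le (fun i hi => ?_) (le_refl N) hj hj
    refine Nat.le_of_mul_le_mul_right ?_ (hpos i)
    rw [binomTerm_succ_mul]
    refine Nat.mul_le_mul_left _ ?_
    calc (N + n - i) * N ≤ n * (i + 1) := Nat.mul_le_mul (by omega) (by omega)
      _ = (i + 1) * n := mul_comm _ _

theorem pow_le_succ_mul_choose_mul_pow_mul_pow {N n : ℕ} (hn : n ≠ 0) :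
    (N + n) ^ (N + n) ≤ (N + n + 1) * ((N + n).choose N * N ^ N * n ^ n) := by
  calc (N + n) ^ (N + n) = ∑ j ∈ range (N + n + 1), binomTerm N n j := (sum_binomTerm N n).symm
    _ ≤ #(range (N + n + 1)) • binomTerm N n N :=
        sum_le_card_nsmul _ _ _ fun j _ => binomTerm_le_binomTerm_self hn j
    _ = _ := by rw [card_range, smul_eq_mul, binomTerm, Nat.add_sub_cancel_left]

variable {X : Type*}

noncomputable def typeDist (m : ℕ) (k : X → ℕ) : X → ℝ := fun a => (k a : ℝ) / m

theorem mix_typeDist {N n : ℕ} (hN : N ≠ 0) (hn : n ≠ 0) (k l : X → ℕ) :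
    mix (typeDist N k) (typeDist n l) (N / n) = typeDist (N + n) (k + l) := by
  funext a
  simp only [mix, typeDist, Pi.add_apply]
  push_cast
  field_simp
  ring

section Types

variable [DecidableEq X]

def typeCount {m : ℕ} (w : Fin m → X) (a : X) : ℕ := (univ.filter fun i => w i = a).card

theorem empDist_eq_typeDist {m : ℕ} (w : Fin m → X) : empDist w = typeDist m (typeCount w) :=
  rfl

variable [Fintype X]

def typeClassCard (m : ℕ) (k : X → ℕ) : ℕ := (univ.filter fun w : Fin m → X => typeCount w = k).card

theorem sum_typeCount {m : ℕ} (w : Fin m → X) : ∑ a, typeCount w a = m := by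
  have := card_eq_sum_card_fiberwise (s := univ) (t := univ) fun i _ => mem_univ (w i)
  rw [card_univ, Fintype.card_fin] at this
  exact this.symm

theorem typeCount_mem_piAntidiag {m : ℕ} (w : Fin m → X) : typeCount w ∈ univ.piAntidiag m := by
  simp [mem_piAntidiag, sum_typeCount]

theorem prod_pow_typeCount {M : Type*} [CommMonoid M] {m : ℕ} (w : Fin m → X) (g : X → M) :
    ∏ a, g a ^ typeCount w a = ∏ i, g (w i) := by
  rw [← prod_fiberwise_of_maps_to (g := w) (t := univ) (fun i _ => mem_univ (w i))]
  refine prod_congr rfl fun a _ => ?_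
  rw [typeCount, ← prod_const]
  exact prod_congr rfl fun i hi => by rw [(mem_filter.1 hi).2]

theorem seqProb_eq_prod_pow (P : X → ℝ) {m : ℕ} (w : Fin m → X) :
    seqProb P w = ∏ a, P a ^ typeCount w a :=
  (prod_pow_typeCount w P).symm

theorem sum_comp_typeCount {M : Type*} [AddCommMonoid M] (m : ℕ) (f : (X → ℕ) → M) :
    ∑ w : Fin m → X, f (typeCount w) = ∑ k ∈ univ.piAntidiag m, typeClassCard m k • f k := by
  rw [← sum_fiberwise_of_maps_to (t := univ.piAntidiag m) fun w _ => typeCount_mem_piAntidiag w]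
  refine sum_congr rfl fun k _ => ?_
  rw [sum_congr rfl fun w hw => by rw [(mem_filter.1 hw).2], sum_const]
  rfl

theorem sum_typeClassCard_mul_prod_pow {R : Type*} [CommSemiring R] (m : ℕ) (g : X → R) :
    ∑ k ∈ univ.piAntidiag m, (typeClassCard m k : R) * ∏ a, g a ^ k a = (∑ a, g a) ^ m := by
  simp_rw [← nsmul_eq_mul, ← sum_comp_typeCount m (fun k => ∏ a, g a ^ k a), prod_pow_typeCount]
  rw [sum_pow', Fintype.piFinset_univ]

theorem typeClassCard_eq_multinomial {m : ℕ} {k : X → ℕ} (hk : ∑ a, k a = m) :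
    typeClassCard m k = Nat.multinomial univ k := by
  -- compare the coefficients of `∏ a, X a ^ k a` in two expansions of `(∑ a, X a) ^ m`
  have hcoeff := congrArg (MvPolynomial.coeff (Finsupp.equivFunOnFinite.symm k))
    (sum_typeClassCard_mul_prod_pow (R := MvPolynomial X ℕ) m MvPolynomial.X)
  simp only [MvPolynomial.coeff_sum_X_pow_of_fintype, MvPolynomial.coeff_sum,
    ← MvPolynomial.C_eq_coe_nat, MvPolynomial.coeff_C_mul, MvPolynomial.coeff_prod_X_pow] at hcoeff
  have hind : ∀ k' : X → ℕ,
      Finsupp.indicator univ (fun a _ => k' a) = Finsupp.equivFunOnFinite.symm k' := fun k' => by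
    ext a; simp [Finsupp.indicator_apply]
  have hsum : ((Finsupp.equivFunOnFinite.symm k).sum fun _ e => e) = m := by
    rw [Finsupp.sum_fintype _ _ (fun _ => rfl)]; exact hk
  simp only [hind, EmbeddingLike.apply_eq_iff_eq, mul_ite, mul_one, mul_zero, sum_ite_eq,
    hsum, if_true, Nat.cast_id] at hcoeff
  rw [if_pos (by simp [mem_piAntidiag, hk])] at hcoeff
  rw [hcoeff, ← Finsupp.multinomial_of_support_subset (subset_univ _)]
  rfl

theorem typeClassCard_mul_typeClassCard_mul_choose {N n : ℕ} {k l : X → ℕ}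
    (hk : ∑ a, k a = N) (hl : ∑ a, l a = n) :
    typeClassCard N k * typeClassCard n l * (N + n).choose N =
      typeClassCard (N + n) (k + l) * ∏ a, (k a + l a).choose (k a) := by
  have hkl : ∑ a, (k + l) a = N + n := by simp [sum_add_distrib, hk, hl]
  rw [typeClassCard_eq_multinomial hk, typeClassCard_eq_multinomial hl,
    typeClassCard_eq_multinomial hkl]
  refine Nat.eq_of_mul_eq_mul_left
    (by positivity : 0 < (∏ a, (k a).factorial) * ∏ a, (l a).factorial) ?_
  calc (∏ a, (k a).factorial) * (∏ a, (l a).factorial) *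
        (Nat.multinomial univ k * Nat.multinomial univ l * (N + n).choose N)
      = (N + n).choose N * ((∏ a, (k a).factorial) * Nat.multinomial univ k) *
          ((∏ a, (l a).factorial) * Nat.multinomial univ l) := by ring
    _ = (N + n).factorial := by
        rw [Nat.multinomial_spec, Nat.multinomial_spec, hk, hl, Nat.choose_symm_add,
          Nat.add_choose_mul_factorial_mul_factorial]
    _ = (∏ a, (k a + l a).choose (k a) * (k a).factorial * (l a).factorial) *
          Nat.multinomial univ (k + l) := by
        have hfac : ∀ a, (k a + l a).choose (k a) * (k a).factorial * (l a).factorial =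
            ((k + l) a).factorial := fun a => by
          rw [Nat.choose_symm_add, Nat.add_choose_mul_factorial_mul_factorial]; rfl
        rw [prod_congr rfl fun a _ => hfac a, Nat.multinomial_spec, hkl]
    _ = _ := by rw [prod_mul_distrib, prod_mul_distrib]; ring

theorem typeClassCard_mul_typeClassCard_mul_pow_le {N n : ℕ} (hn : n ≠ 0) {k l : X → ℕ}
    (hk : ∑ a, k a = N) (hl : ∑ a, l a = n) :
    typeClassCard N k * typeClassCard n l *
        ((N + n) ^ (N + n) * (∏ a, k a ^ k a) * ∏ a, l a ^ l a) ≤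
      (N + n + 1) * typeClassCard (N + n) (k + l) *
        (N ^ N * n ^ n * ∏ a, (k a + l a) ^ (k a + l a)) := by
  calc typeClassCard N k * typeClassCard n l *
        ((N + n) ^ (N + n) * (∏ a, k a ^ k a) * ∏ a, l a ^ l a)
      ≤ typeClassCard N k * typeClassCard n l *
        ((N + n + 1) * ((N + n).choose N * N ^ N * n ^ n) * (∏ a, k a ^ k a) *
          ∏ a, l a ^ l a) := by
        gcongr; exact pow_le_succ_mul_choose_mul_pow_mul_pow hn
    _ = (N + n + 1) * (N ^ N * n ^ n) *
          (typeClassCard N k * typeClassCard n l * (N + n).choose N) *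
          ((∏ a, k a ^ k a) * ∏ a, l a ^ l a) := by ring
    _ = (N + n + 1) * (N ^ N * n ^ n) * typeClassCard (N + n) (k + l) *
          ∏ a, (k a + l a).choose (k a) * k a ^ k a * l a ^ l a := by
        rw [typeClassCard_mul_typeClassCard_mul_choose hk hl, prod_mul_distrib, prod_mul_distrib]
        ring
    _ ≤ (N + n + 1) * (N ^ N * n ^ n) * typeClassCard (N + n) (k + l) *
          ∏ a, (k a + l a) ^ (k a + l a) := by
        gcongr with a; exact choose_mul_pow_mul_pow_le_pow (k a) (l a)
    _ = _ := by ring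

theorem sum_sum_comp_typeCount {R : Type*} [Semiring R] (N n : ℕ)
    (F : (X → ℕ) → (X → ℕ) → R) :
    ∑ x : Fin N → X, ∑ y : Fin n → X, F (typeCount x) (typeCount y) =
      ∑ k ∈ univ.piAntidiag N, ∑ l ∈ univ.piAntidiag n,
        (typeClassCard N k : R) * typeClassCard n l * F k l := by
  rw [sum_comp_typeCount N fun k => ∑ y : Fin n → X, F k (typeCount y)]
  refine sum_congr rfl fun k _ => ?_
  rw [sum_comp_typeCount n (F k), smul_sum]
  simp only [nsmul_eq_mul, mul_assoc]

end Types

section Divergence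

theorem sub_le_mul_log_div {p q : ℝ} (hp : 0 ≤ p) (hq : 0 ≤ q) (hpq : q = 0 → p = 0) :
    p - q ≤ p * log (p / q) := by
  rcases hp.eq_or_lt with rfl | hp
  · simpa using hq
  have hq : 0 < q := hq.lt_of_ne fun h => hp.ne' (hpq h.symm)
  have hlog : log (p / q) = -log (q / p) := by rw [← log_inv, inv_div]
  calc p - q = -(p * (q / p - 1)) := by field_simp; ring
    _ ≤ -(p * log (q / p)) :=
        neg_le_neg (mul_le_mul_of_nonneg_left (log_le_sub_one_of_pos (div_pos hq hp)) hp.le)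
    _ = p * log (p / q) := by rw [hlog, mul_neg]

theorem mul_log_div_add_mul_log_div {t v r : ℝ} (hv : t ≠ 0 → 0 < v) (hr : t ≠ 0 → 0 < r) :
    t * log (t / v) + t * log (v / r) = t * log (t / r) := by
  rcases eq_or_ne t 0 with rfl | ht
  · simp
  rw [← mul_add, ← log_mul (div_ne_zero ht (hv ht).ne') (div_ne_zero (hv ht).ne' (hr ht).ne'),
    div_mul_div_cancel₀ (hv ht).ne']

theorem mix_eq_zero_iff {P1 P2 : X → ℝ} {α : ℝ} (hα : 0 < α) {x : X} (h1 : 0 ≤ P1 x)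
    (h2 : 0 ≤ P2 x) : mix P1 P2 α x = 0 ↔ P1 x = 0 ∧ P2 x = 0 := by
  rw [mix, div_eq_zero_iff]
  constructor
  · rintro (h | h)
    · constructor <;> nlinarith
    · linarith
  · rintro ⟨h1, h2⟩
    left
    rw [h1, h2, mul_zero, add_zero]

variable [Fintype X]

theorem klDivR_nonneg {P Q : X → ℝ} (hP : IsDist P) (hQ : IsDist Q)
    (hPQ : ∀ x, Q x = 0 → P x = 0) : 0 ≤ klDivR P Q := by
  calc (0 : ℝ) = ∑ x, (P x - Q x) := by rw [sum_sub_distrib, hP.2, hQ.2, sub_self]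
    _ ≤ klDivR P Q := sum_le_sum fun x _ => sub_le_mul_log_div (hP.1 x) (hQ.1 x) (hPQ x)

theorem isDist_mix {P1 P2 : X → ℝ} (h1 : IsDist P1) (h2 : IsDist P2) {α : ℝ} (hα : 0 ≤ α) :
    IsDist (mix P1 P2 α) := by
  refine ⟨fun x => by have := h1.1 x; have := h2.1 x; unfold mix; positivity, ?_⟩
  simp only [mix, ← sum_div, sum_add_distrib, ← mul_sum, h1.2, h2.2, mul_one]
  rw [add_comm]
  exact div_self (by positivity)

/-- Compensation identity: `mix P1 P2 α` minimises `R ↦ α D(P1 ‖ R) + D(P2 ‖ R)`. -/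
theorem GJS_add_mul_klDivR_mix {P1 P2 R : X → ℝ} {α : ℝ} (hα : 0 < α) (h1 : ∀ x, 0 ≤ P1 x)
    (h2 : ∀ x, 0 ≤ P2 x) (hR : ∀ x, 0 ≤ R x) (hR0 : ∀ x, R x = 0 → P1 x = 0 ∧ P2 x = 0) :
    GJS P1 P2 α + (1 + α) * klDivR (mix P1 P2 α) R = α * klDivR P1 R + klDivR P2 R := by
  have hpos : ∀ x, P1 x ≠ 0 ∨ P2 x ≠ 0 → 0 < mix P1 P2 α x ∧ 0 < R x := fun x hx => by
    have hV : 0 ≤ mix P1 P2 α x := by have := h1 x; have := h2 x; unfold mix; positivity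
    refine ⟨hV.lt_of_ne' fun h0 => ?_, (hR x).lt_of_ne' fun h0 => ?_⟩
    · have := (mix_eq_zero_iff hα (h1 x) (h2 x)).1 h0; tauto
    · have := hR0 x h0; tauto
  simp only [GJS, klDivR, mul_sum, ← sum_add_distrib]
  refine sum_congr rfl fun x _ => ?_
  have hmix : (1 + α) * mix P1 P2 α x = α * P1 x + P2 x := by
    unfold mix; field_simp
  linear_combination
    α * mul_log_div_add_mul_log_div (fun h => (hpos x (.inl h)).1) (fun h => (hpos x (.inl h)).2) +
    mul_log_div_add_mul_log_div (fun h => (hpos x (.inr h)).1) (fun h => (hpos x (.inr h)).2) +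
    log (mix P1 P2 α x / R x) * hmix

theorem GJS_le_mul_klDivR_add_klDivR {P1 P2 R : X → ℝ} {α : ℝ} (hα : 0 < α) (h1 : IsDist P1)
    (h2 : IsDist P2) (hR : IsDist R) (hR0 : ∀ x, R x = 0 → P1 x = 0 ∧ P2 x = 0) :
    GJS P1 P2 α ≤ α * klDivR P1 R + klDivR P2 R := by
  rw [← GJS_add_mul_klDivR_mix hα h1.1 h2.1 hR.1 hR0]
  refine le_add_of_nonneg_right (mul_nonneg (by positivity) ?_)
  refine klDivR_nonneg (isDist_mix h1 h2 hα.le) hR fun x hx => ?_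
  exact (mix_eq_zero_iff hα (h1.1 x) (h2.1 x)).2 (hR0 x hx)

theorem GJS_le_GJS_of_le {P1 P2 : X → ℝ} (h1 : IsDist P1) (h2 : IsDist P2) {α β : ℝ} (hα : 0 < α)
    (hαβ : α ≤ β) : GJS P1 P2 α ≤ GJS P1 P2 β := by
  have hβ : 0 < β := hα.trans_le hαβ
  have hmix0 : ∀ x, mix P1 P2 β x = 0 → P1 x = 0 ∧ P2 x = 0 := fun x =>
    (mix_eq_zero_iff hβ (h1.1 x) (h2.1 x)).1
  calc GJS P1 P2 α ≤ α * klDivR P1 (mix P1 P2 β) + klDivR P2 (mix P1 P2 β) :=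
        GJS_le_mul_klDivR_add_klDivR hα h1 h2 (isDist_mix h1 h2 hβ.le) hmix0
    _ ≤ GJS P1 P2 β := by
        have := klDivR_nonneg h1 (isDist_mix h1 h2 hβ.le) fun x hx => (hmix0 x hx).1
        unfold GJS
        gcongr

end Divergence

section TypeClassBound

variable [Fintype X]

theorem prod_pow_eq_prod_typeDist_pow_mul_exp {N : ℕ} (hN : N ≠ 0) (k : X → ℕ) {P : X → ℝ}
    (hP : ∀ a, k a ≠ 0 → 0 < P a) :
    ∏ a, P a ^ k a = (∏ a, typeDist N k a ^ k a) * exp (-(N * klDivR (typeDist N k) P)) := by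
  rw [klDivR, mul_sum, ← sum_neg_distrib, exp_sum, ← prod_mul_distrib]
  refine prod_congr rfl fun a _ => ?_
  rcases eq_or_ne (k a) 0 with h | h
  · simp [typeDist, h]
  have ht : 0 < typeDist N k a := by
    have : 0 < k a := Nat.pos_of_ne_zero h
    unfold typeDist; positivity
  have hk : (N : ℝ) * typeDist N k a = k a := by unfold typeDist; field_simp
  rw [← mul_assoc, hk, ← mul_neg, ← log_inv, inv_div, exp_nat_mul, exp_log (div_pos (hP a h) ht),
    ← mul_pow, mul_div_cancel₀ _ ht.ne']

theorem prod_typeDist_pow {N : ℕ} {k : X → ℕ} (hk : ∑ a, k a = N) :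
    ∏ a, typeDist N k a ^ k a = (∏ a, (k a : ℝ) ^ k a) / (N : ℝ) ^ N := by
  simp only [typeDist, div_pow, prod_div_distrib, prod_pow_eq_pow_sum, hk]

theorem isDist_typeDist {N : ℕ} (hN : N ≠ 0) {k : X → ℕ} (hk : ∑ a, k a = N) :
    IsDist (typeDist N k) := by
  refine ⟨fun a => by unfold typeDist; positivity, ?_⟩
  simp only [typeDist, ← sum_div]
  rw [← Nat.cast_sum, hk, div_self (Nat.cast_ne_zero.2 hN)]

theorem typeClassCard_mul_typeClassCard_le [DecidableEq X] {N n : ℕ} (hN : N ≠ 0) (hn : n ≠ 0)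
    {k l : X → ℕ} (hk : ∑ a, k a = N) (hl : ∑ a, l a = n) :
    (typeClassCard N k : ℝ) * typeClassCard n l ≤
      (N + n + 1) * exp (-(n * GJS (typeDist N k) (typeDist n l) (N / n))) *
        typeClassCard (N + n) (k + l) := by
  set V := typeDist (N + n) (k + l)
  have hkl : ∑ a, (k + l) a = N + n := by simp [sum_add_distrib, hk, hl]
  have hV : ∀ a, k a + l a ≠ 0 → 0 < V a := fun a h => by
    have : 0 < k a + l a := Nat.pos_of_ne_zero h
    simp only [V, typeDist, Pi.add_apply]; positivity
  have hGJS : n * GJS (typeDist N k) (typeDist n l) (N / n) =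
      N * klDivR (typeDist N k) V + n * klDivR (typeDist n l) V := by
    rw [GJS, mix_typeDist hN hn]; field_simp; rfl
  set E := exp (-(n * GJS (typeDist N k) (typeDist n l) (N / n)))
  have hE : ∏ a, V a ^ (k + l) a =
      (∏ a, typeDist N k a ^ k a) * (∏ a, typeDist n l a ^ l a) * E := by
    simp only [Pi.add_apply, pow_add, prod_mul_distrib]
    rw [prod_pow_eq_prod_typeDist_pow_mul_exp hN k fun a h => hV a (by omega),
      prod_pow_eq_prod_typeDist_pow_mul_exp hn l fun a h => hV a (by omega)]
    simp only [E, hGJS, neg_add, exp_add]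
    ring
  rw [prod_typeDist_pow hk, prod_typeDist_pow hl, prod_typeDist_pow hkl, div_mul_div_comm,
    div_mul_eq_mul_div, div_eq_div_iff (by positivity) (by positivity)] at hE
  have hself : ∀ j : ℕ, (0 : ℝ) < (j : ℝ) ^ j := fun j => by
    rcases Nat.eq_zero_or_pos j with rfl | hj
    · simp
    · positivity
  have hD : (0 : ℝ) < (N + n) ^ (N + n) * (∏ a, (k a : ℝ) ^ k a) * ∏ a, (l a : ℝ) ^ l a := by
    have := prod_pos fun a (_ : a ∈ univ) => hself (k a)
    have := prod_pos fun a (_ : a ∈ univ) => hself (l a)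
    positivity
  have hcount : (typeClassCard N k : ℝ) * typeClassCard n l *
      ((N + n) ^ (N + n) * (∏ a, (k a : ℝ) ^ k a) * ∏ a, (l a : ℝ) ^ l a) ≤
      (N + n + 1) * typeClassCard (N + n) (k + l) *
        (N ^ N * n ^ n * ∏ a, ((k + l) a : ℝ) ^ (k + l) a) := by
    exact_mod_cast typeClassCard_mul_typeClassCard_mul_pow_le hn hk hl
  refine le_of_mul_le_mul_right (hcount.trans_eq ?_) hD
  push_cast at hE ⊢
  linear_combination ((N : ℝ) + n + 1) * typeClassCard (N + n) (k + l) * hE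

theorem typeClassCard_mul_typeClassCard_le_of_lt_GJS [DecidableEq X] {α lam : ℝ} (hα : 0 < α)
    {N n : ℕ} (hN : N ≠ 0) (hn : n ≠ 0) (hαN : α * n ≤ N) {k l : X → ℕ} (hk : ∑ a, k a = N)
    (hl : ∑ a, l a = n) (hlam : lam < GJS (typeDist N k) (typeDist n l) α) :
    (typeClassCard N k : ℝ) * typeClassCard n l ≤
      (N + n + 1) * exp (-(n * lam)) * typeClassCard (N + n) (k + l) := by
  have hGJS := GJS_le_GJS_of_le (isDist_typeDist hN hk) (isDist_typeDist hn hl) hα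
    ((le_div_iff₀ (by positivity)).2 hαN)
  refine (typeClassCard_mul_typeClassCard_le hN hn hk hl).trans ?_
  gcongr
  linarith

end TypeClassBound

section Counting

variable [Fintype X] [DecidableEq X]

theorem card_piAntidiag_univ_le (N : ℕ) :
    #(univ.piAntidiag N : Finset (X → ℕ)) ≤ (N + 1) ^ (Fintype.card X - 1) := by
  rcases isEmpty_or_nonempty X with hX | ⟨⟨x₀⟩⟩
  · simpa using card_le_one_of_subsingleton (univ.piAntidiag N : Finset (X → ℕ))
  -- a count vector with sum `N` is determined by its entries off `x₀`
  let r : (X → ℕ) → ({a // a ≠ x₀} → ℕ) := fun k a => k a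
  have hinj : Set.InjOn r (univ.piAntidiag N : Finset (X → ℕ)) := by
    intro k hk k' hk' h
    have hoff : ∀ a, a ≠ x₀ → k a = k' a := fun a ha => congrFun h ⟨a, ha⟩
    have hx₀ : k x₀ = k' x₀ := by
      have h := (add_sum_erase univ k (mem_univ x₀)).trans (mem_piAntidiag.1 hk).1
      have h' := (add_sum_erase univ k' (mem_univ x₀)).trans (mem_piAntidiag.1 hk').1
      have e : ∑ a ∈ univ.erase x₀, k a = ∑ a ∈ univ.erase x₀, k' a :=
        sum_congr rfl fun a ha => hoff a (ne_of_mem_erase ha)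
      linarith
    funext a
    by_cases ha : a = x₀
    · rw [ha, hx₀]
    · exact hoff a ha
  have hmaps : Set.MapsTo r (univ.piAntidiag N : Finset (X → ℕ))
      (Fintype.piFinset fun _ : {a // a ≠ x₀} => range (N + 1) : Finset _) := fun k hk => by
    simp only [mem_coe, Fintype.mem_piFinset, mem_range, Nat.lt_succ_iff, r] at hk ⊢
    exact fun a => (mem_piAntidiag.1 hk).1 ▸ single_le_sum (fun _ _ => Nat.zero_le _) (mem_univ _)
  calc #(univ.piAntidiag N : Finset (X → ℕ))
      ≤ #(Fintype.piFinset fun _ : {a // a ≠ x₀} => range (N + 1)) :=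
        card_le_card_of_injOn r hmaps hinj
    _ = (N + 1) ^ (Fintype.card X - 1) := by
        simp [Fintype.card_piFinset, Fintype.card_subtype_compl]

theorem sum_typeClassCard_add_mul_prod_pow_le {Q : X → ℝ} (hQ : IsDist Q) {N : ℕ} (n : ℕ)
    {k : X → ℕ} (hk : k ∈ univ.piAntidiag N) :
    ∑ l ∈ univ.piAntidiag n, (typeClassCard (N + n) (k + l) : ℝ) * ∏ a, Q a ^ (k + l) a ≤ 1 := by
  calc _ = ∑ m ∈ (univ.piAntidiag n).image (k + ·),
          (typeClassCard (N + n) m : ℝ) * ∏ a, Q a ^ m a :=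
        (sum_image fun l _ l' _ h => add_left_cancel h).symm
    _ ≤ ∑ m ∈ univ.piAntidiag (N + n), (typeClassCard (N + n) m : ℝ) * ∏ a, Q a ^ m a := by
        refine sum_le_sum_of_subset_of_nonneg ?_ fun m _ _ =>
          mul_nonneg (Nat.cast_nonneg _) (prod_nonneg fun a _ => pow_nonneg (hQ.1 a) _)
        intro m hm
        obtain ⟨l, hl, rfl⟩ := mem_image.1 hm
        simp only [mem_piAntidiag] at hk hl ⊢
        simp [sum_add_distrib, hk.1, hl.1]
    _ = 1 := by rw [sum_typeClassCard_mul_prod_pow, hQ.2, one_pow]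

end Counting

section ErrorProbability

theorem seqProb_nonneg {P : X → ℝ} (hP : ∀ a, 0 ≤ P a) {m : ℕ} (w : Fin m → X) :
    0 ≤ seqProb P w :=
  prod_nonneg fun i _ => hP (w i)

variable [Fintype X]

theorem sum_seqProb {P : X → ℝ} (hP : ∑ a, P a = 1) (m : ℕ) :
    ∑ w : Fin m → X, seqProb P w = 1 := by
  rw [← one_pow m, ← hP, sum_pow', Fintype.piFinset_univ]
  rfl

theorem beta1_le_one {α : ℝ} {n : ℕ} (φ : BTest X α n) {P1 P2 : X → ℝ} (h1 : IsDist P1)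
    (h2 : IsDist P2) : beta1 φ P1 P2 ≤ 1 := by
  calc beta1 φ P1 P2
      ≤ ∑ x1 : Fin (trainLen α n) → X, ∑ x2 : Fin (trainLen α n) → X, ∑ y : Fin n → X,
          seqProb P1 x1 * seqProb P2 x2 * seqProb P1 y := by
        unfold beta1
        gcongr with x1 _ x2 _ y _
        split_ifs
        · rfl
        · exact mul_nonneg (mul_nonneg (seqProb_nonneg h1.1 _) (seqProb_nonneg h2.1 _))
            (seqProb_nonneg h1.1 _)
    _ = 1 := by simp only [← mul_sum, sum_seqProb h1.2, sum_seqProb h2.2, mul_one]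

variable [DecidableEq X]

theorem beta1_gutman_eq {α lam : ℝ} {n : ℕ} (Q1 : X → ℝ) {Q2 : X → ℝ} (h2 : ∑ a, Q2 a = 1) :
    beta1 (gutman α lam n) Q1 Q2 =
      ∑ x1 : Fin (trainLen α n) → X, ∑ y : Fin n → X,
        if lam < GJS (empDist x1) (empDist y) α then seqProb Q1 x1 * seqProb Q1 y else 0 := by
  unfold beta1 gutman
  refine sum_congr rfl fun x1 _ => ?_
  rw [sum_comm]
  refine sum_congr rfl fun y _ => ?_
  by_cases h : GJS (empDist x1) (empDist y) α ≤ lam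
  · simp [h, not_lt.2 h]
  · simp only [h, if_false, if_pos (not_le.1 h), if_true, ← sum_mul, ← mul_sum,
      sum_seqProb h2, mul_one]

theorem beta1_gutman_eq_sum_piAntidiag {α lam : ℝ} {n : ℕ} (Q1 : X → ℝ) {Q2 : X → ℝ}
    (h2 : ∑ a, Q2 a = 1) :
    beta1 (gutman α lam n) Q1 Q2 =
      ∑ k ∈ univ.piAntidiag (trainLen α n), ∑ l ∈ univ.piAntidiag n,
        (typeClassCard (trainLen α n) k : ℝ) * typeClassCard n l *
          if lam < GJS (typeDist (trainLen α n) k) (typeDist n l) α then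
            ∏ a, Q1 a ^ (k + l) a else 0 := by
  rw [beta1_gutman_eq Q1 h2, ← sum_sum_comp_typeCount]
  simp only [empDist_eq_typeDist, seqProb_eq_prod_pow, Pi.add_apply, pow_add, prod_mul_distrib]

theorem beta1_gutman_le {α lam : ℝ} (hα : 0 < α) {n : ℕ} (hn : n ≠ 0) {Q1 Q2 : X → ℝ}
    (h1 : IsDist Q1) (h2 : IsDist Q2) :
    beta1 (gutman α lam n) Q1 Q2 ≤
      (trainLen α n + n + 1) * exp (-(n * lam)) * (trainLen α n + 1) ^ (Fintype.card X - 1) := by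
  set N := trainLen α n
  have hN : N ≠ 0 := (Nat.ceil_pos.2 (by positivity)).ne'
  have hterm : ∀ k ∈ univ.piAntidiag N, ∀ l ∈ univ.piAntidiag n,
      (typeClassCard N k : ℝ) * typeClassCard n l *
          (if lam < GJS (typeDist N k) (typeDist n l) α then ∏ a, Q1 a ^ (k + l) a else 0) ≤
        (N + n + 1) * exp (-(n * lam)) *
          ((typeClassCard (N + n) (k + l) : ℝ) * ∏ a, Q1 a ^ (k + l) a) := by
    intro k hk l hl
    have hQ : 0 ≤ ∏ a, Q1 a ^ (k + l) a := prod_nonneg fun a _ => pow_nonneg (h1.1 a) _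
    split_ifs with hbad
    · rw [← mul_assoc]
      exact mul_le_mul_of_nonneg_right (typeClassCard_mul_typeClassCard_le_of_lt_GJS hα hN hn
        (Nat.le_ceil _) (mem_piAntidiag.1 hk).1 (mem_piAntidiag.1 hl).1 hbad) hQ
    · rw [mul_zero]
      positivity
  calc beta1 (gutman α lam n) Q1 Q2
      ≤ ∑ k ∈ univ.piAntidiag N, ∑ l ∈ univ.piAntidiag n, (N + n + 1) * exp (-(n * lam)) *
          ((typeClassCard (N + n) (k + l) : ℝ) * ∏ a, Q1 a ^ (k + l) a) := by
        rw [beta1_gutman_eq_sum_piAntidiag Q1 h2.2]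
        exact sum_le_sum fun k hk => sum_le_sum fun l hl => hterm k hk l hl
    _ ≤ ∑ k ∈ univ.piAntidiag N, (N + n + 1) * exp (-(n * lam)) := by
        refine sum_le_sum fun k hk => ?_
        rw [← mul_sum]
        exact mul_le_of_le_one_right (by positivity) (sum_typeClassCard_add_mul_prod_pow_le h1 n hk)
    _ ≤ (N + n + 1) * exp (-(n * lam)) * (N + 1) ^ (Fintype.card X - 1) := by
        rw [sum_const, nsmul_eq_mul, mul_comm]
        gcongr
        exact_mod_cast card_piAntidiag_univ_le N

end ErrorProbability

theorem gutman_beta1_bound_general {X : Type*} [Fintype X] [DecidableEq X]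
    (α lam : ℝ) (hα : 0 < α) (n : ℕ)
    (Q1 Q2 : X → ℝ) (h1 : IsDist Q1) (h2 : IsDist Q2) :
    beta1 (gutman α lam n) Q1 Q2 ≤
      ((n : ℝ) + (trainLen α n : ℝ) + 1) ^ (Fintype.card X) *
        Real.exp (-((n : ℝ) * lam)) := by
  rcases eq_or_ne n 0 with rfl | hn
  · simpa [trainLen] using beta1_le_one (gutman α lam 0) h1 h2
  rcases isEmpty_or_nonempty X with hX | hX
  · have : Nonempty (Fin n) := ⟨⟨0, Nat.pos_of_ne_zero hn⟩⟩
    simp only [beta1, univ_eq_empty, sum_empty, sum_const_zero]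
    positivity
  obtain ⟨d, hd⟩ := Nat.exists_eq_succ_of_ne_zero (Fintype.card_ne_zero (α := X))
  calc beta1 (gutman α lam n) Q1 Q2
      ≤ (trainLen α n + n + 1) * exp (-(n * lam)) * (trainLen α n + 1) ^ d := by
        simpa [hd] using beta1_gutman_le hα hn h1 h2
    _ ≤ (trainLen α n + n + 1) * exp (-(n * lam)) * (trainLen α n + n + 1) ^ d := by
        gcongr
        exact le_add_of_nonneg_right (Nat.cast_nonneg n)
    _ = _ := by rw [hd, pow_succ]; ring

/-- non-asymptotic type-I error bound for Gutman's test: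
`β₁(φ_n^Gut | P̃1, P̃2) ≤ (n + N + 1)^{|X|} exp(-nλ)` for all pairs of distributions. -/
theorem gutman_beta1_bound {X : Type*} [Fintype X] [DecidableEq X]
    (α lam : ℝ) (hα : 0 < α) (hlam : 0 < lam) (n : ℕ)
    (Q1 Q2 : X → ℝ) (h1 : IsDist Q1) (h2 : IsDist Q2) :
    beta1 (gutman α lam n) Q1 Q2 ≤
      ((n : ℝ) + (trainLen α n : ℝ) + 1) ^ (Fintype.card X) *
        Real.exp (-((n : ℝ) * lam)) :=
  gutman_beta1_bound_general α lam hα n Q1 Q2 h1 h2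

end Classification
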